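/- If X = Iₙ, then Pert(X) = {Z ∈ ∂𝒞 : Iₙ ± tZ ∈ 𝒞 for small t > 0} consists exactly of the nonnegative scalar multiples of Iₙ. -/

import Mathlib

open Matrix
open scoped ComplexOrder

/-- Singular values of a square matrix over ℝ or ℂ, in decreasing order:
`sv A i` is the `(i+1)`-st largest singular value. -/
noncomputable def sv {𝕜 : Type*} [RCLike 𝕜] {n : ℕ} (A : Matrix (Fin n) (Fin n) 𝕜)
    (i : Fin n) : ℝ :=
  Real.sqrt (((Matrix.isHermitian_conjTranspose_mul_self A).eigenvalues ∘
    Tuple.sort ((Matrix.isHermitian_conjTranspose_mul_self A).eigenvalues)) i.rev)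

/-- `svN A j` is `s_{j+1}(A)`, with junk value `0` out of range. -/
noncomputable def svN {𝕜 : Type*} [RCLike 𝕜] {n : ℕ} (A : Matrix (Fin n) (Fin n) 𝕜)
    (j : ℕ) : ℝ :=
  if h : j < n then sv A ⟨j, h⟩ else 0

/-- The Ky-Fan `k`-norm: sum of the `k` largest singular values. -/
noncomputable def kyFan {𝕜 : Type*} [RCLike 𝕜] {n : ℕ} (k : ℕ)
    (A : Matrix (Fin n) (Fin n) 𝕜) : ℝ :=
  ∑ i ∈ Finset.univ.filter (fun i : Fin n => (i : ℕ) < k), sv A i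

/-- Parallelism with respect to the Ky-Fan `k`-norm. -/
def KFParallel {𝕜 : Type*} [RCLike 𝕜] {n : ℕ} (k : ℕ)
    (A B : Matrix (Fin n) (Fin n) 𝕜) : Prop :=
  ∃ μ : 𝕜, ‖μ‖ = 1 ∧ kyFan k (A + μ • B) = kyFan k A + kyFan k B

/-- Block diagonal direct sum `X₁ ⊕ X₂`. -/
def bd {R : Type*} [Zero R] {k m : ℕ} (X₁ : Matrix (Fin k) (Fin k) R)
    (X₂ : Matrix (Fin m) (Fin m) R) : Matrix (Fin (k + m)) (Fin (k + m)) R :=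
  Matrix.reindex finSumFinEquiv finSumFinEquiv (Matrix.fromBlocks X₁ 0 0 X₂)

/-- The cone 𝒞 of block matrices `X₁ ⊕ X₂` with `X₁` psd and `s_k(X₁) ≥ s₁(X₂)`. -/
def CC (k m : ℕ) : Set (Matrix (Fin (k + m)) (Fin (k + m)) ℂ) :=
  {X | ∃ (X₁ : Matrix (Fin k) (Fin k) ℂ) (X₂ : Matrix (Fin m) (Fin m) ℂ), X = bd X₁ X₂ ∧ X₁.PosSemidef ∧ svN X₂ 0 ≤ svN X₁ (k - 1)}

/-- The relative boundary of 𝒞: `X₁` psd with `s_k(X₁) = s₁(X₂)`. -/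
def bC (k m : ℕ) : Set (Matrix (Fin (k + m)) (Fin (k + m)) ℂ) :=
  {X | ∃ (X₁ : Matrix (Fin k) (Fin k) ℂ) (X₂ : Matrix (Fin m) (Fin m) ℂ), X = bd X₁ X₂ ∧ X₁.PosSemidef ∧ svN X₂ 0 = svN X₁ (k - 1)}

/-- `Pert(X)`: elements `Z` of `∂𝒞` with `X ± tZ ∈ 𝒞` for all sufficiently small `t > 0`. -/
def Pert (k m : ℕ) (X : Matrix (Fin (k + m)) (Fin (k + m)) ℂ) :
    Set (Matrix (Fin (k + m)) (Fin (k + m)) ℂ) :=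
  {Z | Z ∈ bC k m ∧ ∃ ε : ℝ, 0 < ε ∧ ∀ t : ℝ, 0 < t → t ≤ ε →
    X + t • Z ∈ CC k m ∧ X - t • Z ∈ CC k m}

noncomputable def Nr {n : ℕ} (v : Fin n → ℂ) : ℝ := ∑ i, Complex.normSq (v i)

lemma star_dot_self {n : ℕ} (v : Fin n → ℂ) :
    dotProduct (star v) v = ((Nr v : ℝ) : ℂ) := by
  unfold Nr; push_cast
  simp [dotProduct, Pi.star_apply, mul_comm, Complex.mul_conj]

lemma Nr_nonneg {n : ℕ} (v : Fin n → ℂ) : 0 ≤ Nr v :=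
  Finset.sum_nonneg fun _ _ => Complex.normSq_nonneg _

lemma Nr_eq_zero {n : ℕ} {v : Fin n → ℂ} (h : Nr v ≤ 0) : v = 0 := by
  funext i
  have h2 := (Finset.sum_eq_zero_iff_of_nonneg (fun i _ => Complex.normSq_nonneg (v i))).1
    (le_antisymm h (Nr_nonneg v)) i (Finset.mem_univ i)
  simpa [Complex.normSq_eq_zero] using h2

lemma norm_euclid {n : ℕ} (v : Fin n → ℂ) :
    ‖(WithLp.equiv 2 (Fin n → ℂ)).symm v‖ = Real.sqrt (Nr v) := by
  rw [EuclideanSpace.norm_eq]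
  congr 1
  unfold Nr
  refine Finset.sum_congr rfl fun i _ => ?_
  rw [Complex.sq_norm]; rfl

lemma cs_re {n : ℕ} (v u : Fin n → ℂ) :
    Complex.re (dotProduct (star v) u) ≤ Real.sqrt (Nr v) * Real.sqrt (Nr u) := by
  have h := re_inner_le_norm (𝕜 := ℂ) ((WithLp.equiv 2 (Fin n → ℂ)).symm v)
    ((WithLp.equiv 2 (Fin n → ℂ)).symm u)
  rw [show inner ℂ ((WithLp.equiv 2 (Fin n → ℂ)).symm v) ((WithLp.equiv 2 (Fin n → ℂ)).symm u)
      = dotProduct (star v) u by rw [dotProduct_comm]; rfl, norm_euclid, norm_euclid] at h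
  exact h

lemma quad_repr {n : ℕ} {A : Matrix (Fin n) (Fin n) ℂ} (hA : A.IsHermitian) (v : Fin n → ℂ) :
    ∃ wt : Fin n → ℝ, (∀ i, 0 ≤ wt i) ∧ (∑ i, wt i) = Complex.re (dotProduct (star v) v) ∧
      Complex.re (dotProduct (star v) (A *ᵥ v)) = ∑ i, hA.eigenvalues i * wt i := by
  have hUU : (hA.eigenvectorUnitary : Matrix (Fin n) (Fin n) ℂ) *
      star (hA.eigenvectorUnitary : Matrix (Fin n) (Fin n) ℂ) = 1 :=
    (Matrix.mem_unitaryGroup_iff).mp (hA.eigenvectorUnitary).2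
  have key : ∀ x : Fin n → ℂ,
      dotProduct (star v) ((hA.eigenvectorUnitary : Matrix (Fin n) (Fin n) ℂ) *ᵥ x)
      = dotProduct
          (star (star (hA.eigenvectorUnitary : Matrix (Fin n) (Fin n) ℂ) *ᵥ v)) x := by
    intro x
    rw [dotProduct_mulVec]
    congr 1
    rw [Matrix.star_mulVec, ← Matrix.star_eq_conjTranspose, star_star]
  have claim3 : dotProduct (star v) v
      = dotProduct (star (star (hA.eigenvectorUnitary : Matrix (Fin n) (Fin n) ℂ) *ᵥ v))
          (star (hA.eigenvectorUnitary : Matrix (Fin n) (Fin n) ℂ) *ᵥ v) := by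
    rw [← key]
    rw [Matrix.mulVec_mulVec, hUU, Matrix.one_mulVec]
  have claim2 : dotProduct (star v) (A *ᵥ v)
      = dotProduct (star (star (hA.eigenvectorUnitary : Matrix (Fin n) (Fin n) ℂ) *ᵥ v))
          (Matrix.diagonal (RCLike.ofReal ∘ hA.eigenvalues) *ᵥ
            (star (hA.eigenvectorUnitary : Matrix (Fin n) (Fin n) ℂ) *ᵥ v)) := by
    rw [← key]
    rw [Matrix.mulVec_mulVec, Matrix.mulVec_mulVec, ← Unitary.conjStarAlgAut_apply (S := ℂ),
      ← hA.spectral_theorem]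
  refine ⟨fun i => Complex.normSq ((star (hA.eigenvectorUnitary : Matrix (Fin n) (Fin n) ℂ) *ᵥ v) i),
      fun i => Complex.normSq_nonneg _, ?_, ?_⟩
  · rw [claim3, star_dot_self]
    simp [Nr]
  · rw [claim2, dotProduct, Complex.re_sum]
    refine Finset.sum_congr rfl fun i _ => ?_
    rw [Matrix.mulVec_diagonal]
    simp only [Function.comp_apply, Pi.star_apply]
    simp [RCLike.star_def, Complex.mul_re, Complex.conj_re, Complex.conj_im, Complex.normSq_apply,
      RCLike.ofReal_alg]
    ring


section svlemmas
variable {n : ℕ}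

lemma sv_nonneg (A : Matrix (Fin n) (Fin n) ℂ) (i : Fin n) : 0 ≤ sv A i := Real.sqrt_nonneg _

lemma svN_nonneg (A : Matrix (Fin n) (Fin n) ℂ) (j : ℕ) : 0 ≤ svN A j := by
  unfold svN
  split
  · exact sv_nonneg A _
  · exact le_refl 0

lemma eigAAt_nonneg (A : Matrix (Fin n) (Fin n) ℂ) (j : Fin n) :
    0 ≤ (Matrix.isHermitian_conjTranspose_mul_self A).eigenvalues j :=
  (Matrix.posSemidef_conjTranspose_mul_self A).eigenvalues_nonneg j

lemma sq_sv (A : Matrix (Fin n) (Fin n) ℂ) (i : Fin n) :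
    sv A i ^ 2 = ((Matrix.isHermitian_conjTranspose_mul_self A).eigenvalues ∘
      Tuple.sort ((Matrix.isHermitian_conjTranspose_mul_self A).eigenvalues)) i.rev := by
  unfold sv
  exact Real.sq_sqrt (eigAAt_nonneg A _)

lemma eig_le_sq_svN0 (A : Matrix (Fin n) (Fin n) ℂ) (hn : 0 < n) (j : Fin n) :
    (Matrix.isHermitian_conjTranspose_mul_self A).eigenvalues j ≤ svN A 0 ^ 2 := by
  rw [svN, dif_pos hn, sq_sv]
  set eg := (Matrix.isHermitian_conjTranspose_mul_self A).eigenvalues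
  have h1 : eg j = (eg ∘ Tuple.sort eg) ((Tuple.sort eg)⁻¹ j) := by
    simp [Function.comp_apply]
  rw [h1]
  apply Tuple.monotone_sort
  rw [Fin.le_def, Fin.val_rev]
  have h2 := ((Tuple.sort eg)⁻¹ j).isLt
  simp only [Fin.val_mk]
  omega

lemma sq_svN_last_le_eig (A : Matrix (Fin n) (Fin n) ℂ) (hn : 0 < n) (j : Fin n) :
    svN A (n - 1) ^ 2 ≤ (Matrix.isHermitian_conjTranspose_mul_self A).eigenvalues j := by
  rw [svN, dif_pos (by omega : n - 1 < n), sq_sv]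
  set eg := (Matrix.isHermitian_conjTranspose_mul_self A).eigenvalues
  have h1 : eg j = (eg ∘ Tuple.sort eg) ((Tuple.sort eg)⁻¹ j) := by
    simp [Function.comp_apply]
  rw [h1]
  apply Tuple.monotone_sort
  rw [Fin.le_def, Fin.val_rev]
  have h2 := ((Tuple.sort eg)⁻¹ j).isLt
  simp only [Fin.val_mk]
  omega

lemma dot_conj (A : Matrix (Fin n) (Fin n) ℂ) (w : Fin n → ℂ) :
    dotProduct (star (A *ᵥ w)) (A *ᵥ w)
      = dotProduct (star w) ((Aᴴ * A) *ᵥ w) := by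
  rw [Matrix.star_mulVec, ← dotProduct_mulVec, Matrix.mulVec_mulVec]

lemma Nr_mulVec_le (A : Matrix (Fin n) (Fin n) ℂ) (hn : 0 < n) (w : Fin n → ℂ)
    (hw : dotProduct (star w) w = 1) : Nr (A *ᵥ w) ≤ svN A 0 ^ 2 := by
  obtain ⟨wt, hpos, hsum, hre⟩ := quad_repr (Matrix.isHermitian_conjTranspose_mul_self A) w
  have h0 : Nr (A *ᵥ w) = Complex.re (dotProduct (star (A *ᵥ w)) (A *ᵥ w)) := by
    rw [star_dot_self, Complex.ofReal_re]
  rw [h0, dot_conj, hre]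
  have hsum1 : ∑ i, wt i = 1 := by rw [hsum, hw]; rfl
  calc ∑ i, (Matrix.isHermitian_conjTranspose_mul_self A).eigenvalues i * wt i
      ≤ ∑ i, svN A 0 ^ 2 * wt i := by
        apply Finset.sum_le_sum
        intro i _
        exact mul_le_mul_of_nonneg_right (eig_le_sq_svN0 A hn i) (hpos i)
    _ = svN A 0 ^ 2 := by rw [← Finset.mul_sum, hsum1, mul_one]

lemma sq_svN_last_le_Nr (A : Matrix (Fin n) (Fin n) ℂ) (hn : 0 < n) (v : Fin n → ℂ)
    (hv : dotProduct (star v) v = 1) : svN A (n - 1) ^ 2 ≤ Nr (A *ᵥ v) := by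
  obtain ⟨wt, hpos, hsum, hre⟩ := quad_repr (Matrix.isHermitian_conjTranspose_mul_self A) v
  have h0 : Nr (A *ᵥ v) = Complex.re (dotProduct (star (A *ᵥ v)) (A *ᵥ v)) := by
    rw [star_dot_self, Complex.ofReal_re]
  rw [h0, dot_conj, hre]
  have hsum1 : ∑ i, wt i = 1 := by rw [hsum, hv]; rfl
  calc svN A (n - 1) ^ 2 = ∑ i, svN A (n-1) ^ 2 * wt i := by rw [← Finset.mul_sum, hsum1, mul_one]
    _ ≤ ∑ i, (Matrix.isHermitian_conjTranspose_mul_self A).eigenvalues i * wt i := by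
        apply Finset.sum_le_sum
        intro i _
        exact mul_le_mul_of_nonneg_right (sq_svN_last_le_eig A hn i) (hpos i)

lemma re_dot_le_svN0 (A : Matrix (Fin n) (Fin n) ℂ) (hn : 0 < n) (w : Fin n → ℂ)
    (hw : dotProduct (star w) w = 1) :
    Complex.re (dotProduct (star w) (A *ᵥ w)) ≤ svN A 0 := by
  have h1 := cs_re w (A *ᵥ w)
  have hNw : Nr w = 1 := by
    have := star_dot_self w
    rw [hw] at this
    exact_mod_cast this.symm
  have h2 : Real.sqrt (Nr (A *ᵥ w)) ≤ svN A 0 := by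
    have := Nr_mulVec_le A hn w hw
    calc Real.sqrt (Nr (A *ᵥ w)) ≤ Real.sqrt (svN A 0 ^ 2) := Real.sqrt_le_sqrt this
      _ = svN A 0 := Real.sqrt_sq (svN_nonneg A 0)
  calc Complex.re (dotProduct (star w) (A *ᵥ w))
      ≤ Real.sqrt (Nr w) * Real.sqrt (Nr (A *ᵥ w)) := h1
    _ = Real.sqrt (Nr (A *ᵥ w)) := by rw [hNw, Real.sqrt_one, one_mul]
    _ ≤ svN A 0 := h2

end svlemmas



section scalarlemmas
variable {n : ℕ}

lemma real_smul_mat {ι : Type*} (c : ℝ) (M : Matrix ι ι ℂ) : c • M = (c : ℂ) • M := by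
  ext i j
  simp [Complex.real_smul]

lemma real_smul_vec (c : ℝ) (v : Fin n → ℂ) : c • v = (c : ℂ) • v := by
  funext i
  simp [Complex.real_smul]

lemma Nr_real_smul (r : ℝ) (v : Fin n → ℂ) : Nr ((r : ℂ) • v) = r ^ 2 * Nr v := by
  unfold Nr
  rw [Finset.mul_sum]
  refine Finset.sum_congr rfl fun i _ => ?_
  rw [Pi.smul_apply, smul_eq_mul, Complex.normSq_mul, Complex.normSq_ofReal]
  ring

lemma Nr_sub_smul (u w : Fin n → ℂ) (r : ℝ) :
    Nr (u - (r : ℂ) • w)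
      = Nr u - 2 * r * Complex.re (dotProduct (star w) u) + r ^ 2 * Nr w := by
  unfold Nr
  rw [dotProduct, Complex.re_sum]
  rw [Finset.mul_sum, Finset.mul_sum, ← Finset.sum_sub_distrib, ← Finset.sum_add_distrib]
  refine Finset.sum_congr rfl fun i _ => ?_
  simp only [Pi.sub_apply, Pi.smul_apply, smul_eq_mul, Pi.star_apply]
  simp [Complex.normSq_apply, Complex.mul_re, Complex.mul_im, Complex.sub_re, Complex.sub_im,
    RCLike.star_def, Complex.conj_re, Complex.conj_im]
  ring

lemma eig_of_scalar (r : ℝ) {A : Matrix (Fin n) (Fin n) ℂ} (hA : A.IsHermitian)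
    (h : A = (r : ℂ) • 1) (i : Fin n) : hA.eigenvalues i = r := by
  subst h
  have hb : dotProduct (star ⇑(hA.eigenvectorBasis i)) ⇑(hA.eigenvectorBasis i) = 1 := by
    have h1 := hA.eigenvectorBasis.orthonormal.1 i
    have h2 := EuclideanSpace.inner_eq_star_dotProduct (𝕜 := ℂ)
      (hA.eigenvectorBasis i) (hA.eigenvectorBasis i)
    rw [inner_self_eq_norm_sq_to_K, h1] at h2
    rw [dotProduct_comm, ← h2]
    norm_num
  rw [hA.eigenvalues_eq, Matrix.smul_mulVec, Matrix.one_mulVec,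
    dotProduct_smul, hb]
  simp

lemma svN_smul_one (r : ℝ) (hr : 0 ≤ r) {j : ℕ} (hj : j < n) :
    svN ((r : ℂ) • (1 : Matrix (Fin n) (Fin n) ℂ)) j = r := by
  rw [svN, dif_pos hj]
  unfold sv
  have h : (((r : ℂ) • (1 : Matrix (Fin n) (Fin n) ℂ))ᴴ * ((r : ℂ) • 1))
      = ((r * r : ℝ) : ℂ) • 1 := by
    rw [Matrix.conjTranspose_smul, Matrix.conjTranspose_one, Matrix.smul_mul, Matrix.mul_smul,
      Matrix.one_mul, smul_smul]
    push_cast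
    rw [Complex.star_def, Complex.conj_ofReal]
  rw [Function.comp_apply, eig_of_scalar (r * r) _ h]
  exact Real.sqrt_mul_self hr

lemma psd_scalar (r : ℝ) (hr : 0 ≤ r) :
    ((r : ℂ) • (1 : Matrix (Fin n) (Fin n) ℂ)).PosSemidef := by
  rw [Matrix.posSemidef_iff_dotProduct_mulVec]
  constructor
  · unfold Matrix.IsHermitian
    rw [Matrix.conjTranspose_smul, Matrix.conjTranspose_one, Complex.star_def,
      Complex.conj_ofReal]
  · intro x
    have h : dotProduct (star x) (((r : ℂ) • 1) *ᵥ x) = ((r * Nr x : ℝ) : ℂ) := by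
      rw [Matrix.smul_mulVec, Matrix.one_mulVec, dotProduct_smul, star_dot_self]
      push_cast
      rw [smul_eq_mul]
    rw [h, Complex.zero_le_real]
    exact mul_nonneg hr (Nr_nonneg x)

lemma single_unit (j : Fin n) :
    dotProduct (star (Pi.single j 1 : Fin n → ℂ)) (Pi.single j 1) = 1 := by
  simp [dotProduct, Pi.single_apply]

end scalarlemmas

section bdlemmas
variable {k m : ℕ}

lemma bd_inj {A A' : Matrix (Fin k) (Fin k) ℂ} {B B' : Matrix (Fin m) (Fin m) ℂ}
    (h : bd A B = bd A' B') : A = A' ∧ B = B' := by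
  unfold bd at h
  have h2 := (Matrix.reindex finSumFinEquiv finSumFinEquiv).injective h
  constructor
  · have h3 := congrArg Matrix.toBlocks₁₁ h2
    simpa [Matrix.toBlocks_fromBlocks₁₁] using h3
  · have h3 := congrArg Matrix.toBlocks₂₂ h2
    simpa [Matrix.toBlocks_fromBlocks₂₂] using h3

lemma bd_one : bd (1 : Matrix (Fin k) (Fin k) ℂ) (1 : Matrix (Fin m) (Fin m) ℂ) = 1 := by
  unfold bd
  rw [Matrix.fromBlocks_one, Matrix.reindex_apply, Matrix.submatrix_one_equiv]

lemma bd_smul (c : ℂ) (A : Matrix (Fin k) (Fin k) ℂ) (B : Matrix (Fin m) (Fin m) ℂ) :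
    bd (c • A) (c • B) = c • bd A B := by
  ext i j
  simp only [bd, Matrix.reindex_apply, Matrix.submatrix_apply, Matrix.smul_apply]
  cases finSumFinEquiv.symm i <;> cases finSumFinEquiv.symm j <;> simp [Matrix.fromBlocks]

lemma bd_add (A C : Matrix (Fin k) (Fin k) ℂ) (B D : Matrix (Fin m) (Fin m) ℂ) :
    bd (A + C) (B + D) = bd A B + bd C D := by
  ext i j
  simp only [bd, Matrix.reindex_apply, Matrix.submatrix_apply, Matrix.add_apply]
  cases finSumFinEquiv.symm i <;> cases finSumFinEquiv.symm j <;> simp [Matrix.fromBlocks]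

lemma bd_sub (A C : Matrix (Fin k) (Fin k) ℂ) (B D : Matrix (Fin m) (Fin m) ℂ) :
    bd (A - C) (B - D) = bd A B - bd C D := by
  ext i j
  simp only [bd, Matrix.reindex_apply, Matrix.submatrix_apply, Matrix.sub_apply]
  cases finSumFinEquiv.symm i <;> cases finSumFinEquiv.symm j <;> simp [Matrix.fromBlocks]

end bdlemmas

lemma le_of_sq_le_sq' {a b : ℝ} (h : a ^ 2 ≤ b ^ 2) (hb : 0 ≤ b) : a ≤ b := by
  nlinarith [sq_nonneg (a + b), sq_nonneg (a - b)]

lemma scalar_mem_CC {k m : ℕ} (hk : 1 < k) (hm : 0 < m) (r : ℝ) (hr : 0 ≤ r) :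
    ((r : ℂ) • 1 : Matrix (Fin (k + m)) (Fin (k + m)) ℂ) ∈ CC k m := by
  refine ⟨(r : ℂ) • 1, (r : ℂ) • 1, ?_, psd_scalar r hr, ?_⟩
  · rw [bd_smul, bd_one]
  · rw [svN_smul_one r hr hm, svN_smul_one r hr (show k - 1 < k by omega)]

lemma scalar_mem_bC {k m : ℕ} (hk : 1 < k) (hm : 0 < m) (r : ℝ) (hr : 0 ≤ r) :
    ((r : ℂ) • 1 : Matrix (Fin (k + m)) (Fin (k + m)) ℂ) ∈ bC k m := by
  refine ⟨(r : ℂ) • 1, (r : ℂ) • 1, ?_, psd_scalar r hr, ?_⟩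
  · rw [bd_smul, bd_one]
  · rw [svN_smul_one r hr hm, svN_smul_one r hr (show k - 1 < k by omega)]


section eigvec
variable {n : ℕ}

lemma basis_unit {A : Matrix (Fin n) (Fin n) ℂ} (hA : A.IsHermitian) (i : Fin n) :
    dotProduct (star ⇑(hA.eigenvectorBasis i)) ⇑(hA.eigenvectorBasis i) = 1 := by
  have h1 := hA.eigenvectorBasis.orthonormal.1 i
  have h2 := EuclideanSpace.inner_eq_star_dotProduct (𝕜 := ℂ)
    (hA.eigenvectorBasis i) (hA.eigenvectorBasis i)
  rw [inner_self_eq_norm_sq_to_K, h1] at h2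
  rw [dotProduct_comm, ← h2]
  norm_num

lemma Nr_of_unit {v : Fin n → ℂ} (hv : dotProduct (star v) v = 1) : Nr v = 1 := by
  have h := star_dot_self v
  rw [hv] at h
  exact_mod_cast h.symm

lemma svN_last_le_one_sub {A : Matrix (Fin n) (Fin n) ℂ} (hA : A.IsHermitian) (hn : 0 < n)
    (s : ℝ) (i : Fin n) (hnn : 0 ≤ 1 - s * hA.eigenvalues i) :
    svN ((1 : Matrix (Fin n) (Fin n) ℂ) - (s : ℂ) • A) (n - 1) ≤ 1 - s * hA.eigenvalues i := by
  have hv : dotProduct (star ⇑(hA.eigenvectorBasis i)) ⇑(hA.eigenvectorBasis i) = 1 :=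
    basis_unit hA i
  have hmul : ((1 : Matrix (Fin n) (Fin n) ℂ) - (s : ℂ) • A) *ᵥ ⇑(hA.eigenvectorBasis i)
      = ((1 - s * hA.eigenvalues i : ℝ) : ℂ) • ⇑(hA.eigenvectorBasis i) := by
    rw [Matrix.sub_mulVec, Matrix.one_mulVec, Matrix.smul_mulVec,
      hA.mulVec_eigenvectorBasis, real_smul_vec, smul_smul,
      show ((1 - s * hA.eigenvalues i : ℝ) : ℂ) = 1 - (s : ℂ) * (hA.eigenvalues i : ℂ) by
        push_cast; ring,
      sub_smul, one_smul]
  have h2 := sq_svN_last_le_Nr ((1 : Matrix (Fin n) (Fin n) ℂ) - (s : ℂ) • A) hn _ hv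
  rw [hmul, Nr_real_smul, Nr_of_unit hv, mul_one] at h2
  exact le_of_sq_le_sq' h2 hnn

lemma svN_last_le_one_add {A : Matrix (Fin n) (Fin n) ℂ} (hA : A.IsHermitian) (hn : 0 < n)
    (s : ℝ) (i : Fin n) (hnn : 0 ≤ 1 + s * hA.eigenvalues i) :
    svN ((1 : Matrix (Fin n) (Fin n) ℂ) + (s : ℂ) • A) (n - 1) ≤ 1 + s * hA.eigenvalues i := by
  have hv : dotProduct (star ⇑(hA.eigenvectorBasis i)) ⇑(hA.eigenvectorBasis i) = 1 :=
    basis_unit hA i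
  have hmul : ((1 : Matrix (Fin n) (Fin n) ℂ) + (s : ℂ) • A) *ᵥ ⇑(hA.eigenvectorBasis i)
      = ((1 + s * hA.eigenvalues i : ℝ) : ℂ) • ⇑(hA.eigenvectorBasis i) := by
    rw [Matrix.add_mulVec, Matrix.one_mulVec, Matrix.smul_mulVec,
      hA.mulVec_eigenvectorBasis, real_smul_vec, smul_smul,
      show ((1 + s * hA.eigenvalues i : ℝ) : ℂ) = 1 + (s : ℂ) * (hA.eigenvalues i : ℂ) by
        push_cast; ring,
      add_smul, one_smul]
  have h2 := sq_svN_last_le_Nr ((1 : Matrix (Fin n) (Fin n) ℂ) + (s : ℂ) • A) hn _ hv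
  rw [hmul, Nr_real_smul, Nr_of_unit hv, mul_one] at h2
  exact le_of_sq_le_sq' h2 hnn

lemma re_dot_one_sub (A : Matrix (Fin n) (Fin n) ℂ) (s : ℝ) (w : Fin n → ℂ)
    (hw : dotProduct (star w) w = 1) :
    Complex.re (dotProduct (star w) (((1 : Matrix (Fin n) (Fin n) ℂ) - (s : ℂ) • A) *ᵥ w))
      = 1 - s * Complex.re (dotProduct (star w) (A *ᵥ w)) := by
  rw [Matrix.sub_mulVec, Matrix.one_mulVec, dotProduct_sub, hw,
    Matrix.smul_mulVec, dotProduct_smul, smul_eq_mul, Complex.sub_re,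
    Complex.one_re, Complex.re_ofReal_mul]

lemma re_dot_one_add (A : Matrix (Fin n) (Fin n) ℂ) (s : ℝ) (w : Fin n → ℂ)
    (hw : dotProduct (star w) w = 1) :
    Complex.re (dotProduct (star w) (((1 : Matrix (Fin n) (Fin n) ℂ) + (s : ℂ) • A) *ᵥ w))
      = 1 + s * Complex.re (dotProduct (star w) (A *ᵥ w)) := by
  rw [Matrix.add_mulVec, Matrix.one_mulVec, dotProduct_add, hw,
    Matrix.smul_mulVec, dotProduct_smul, smul_eq_mul, Complex.add_re,
    Complex.one_re, Complex.re_ofReal_mul]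

end eigvec

theorem stmt16 (k m : ℕ) (hk : 1 < k) (hm : 0 < m) :
    Pert k m (1 : Matrix (Fin (k + m)) (Fin (k + m)) ℂ) =
      {Z | ∃ c : ℝ, 0 ≤ c ∧ Z = c • (1 : Matrix (Fin (k + m)) (Fin (k + m)) ℂ)} := by
  have hk0 : 0 < k := by omega
  ext Z
  simp only [Set.mem_setOf_eq]
  constructor
  · rintro ⟨⟨Z₁, Z₂, rfl, hZ1, hs⟩, ε, hε, hP⟩
    have hH : Z₁.IsHermitian := hZ1.1
    obtain ⟨imax, -, hmax⟩ := Finset.exists_max_image (Finset.univ : Finset (Fin k))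
      hH.eigenvalues ⟨⟨0, hk0⟩, Finset.mem_univ _⟩
    obtain ⟨imin, -, hmin⟩ := Finset.exists_min_image (Finset.univ : Finset (Fin k))
      hH.eigenvalues ⟨⟨0, hk0⟩, Finset.mem_univ _⟩
    set lM := hH.eigenvalues imax with hlMdef
    set lm := hH.eigenvalues imin with hlmdef
    have hlM0 : 0 ≤ lM := hZ1.eigenvalues_nonneg imax
    have hlm0 : 0 ≤ lm := hZ1.eigenvalues_nonneg imin
    set t := min ε (1 / (1 + lM)) with htdef
    have ht : 0 < t := lt_min hε (by positivity)
    have htε : t ≤ ε := min_le_left _ _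
    have h1mt : 0 ≤ 1 - t * lM := by
      have h1 : t ≤ 1 / (1 + lM) := min_le_right _ _
      have h2 : t * (1 + lM) ≤ 1 := by
        rw [← le_div_iff₀ (by positivity)]
        exact h1
      nlinarith
    obtain ⟨hCp, hCm⟩ := hP t ht htε
    have hplusbd : (1 : Matrix (Fin (k + m)) (Fin (k + m)) ℂ) + t • bd Z₁ Z₂
        = bd (1 + (t : ℂ) • Z₁) (1 + (t : ℂ) • Z₂) := by
      rw [bd_add, bd_smul, bd_one, real_smul_mat]
    have hminusbd : (1 : Matrix (Fin (k + m)) (Fin (k + m)) ℂ) - t • bd Z₁ Z₂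
        = bd (1 - (t : ℂ) • Z₁) (1 - (t : ℂ) • Z₂) := by
      rw [bd_sub, bd_smul, bd_one, real_smul_mat]
    rw [hplusbd] at hCp
    rw [hminusbd] at hCm
    obtain ⟨X₁, X₂, heqP, -, hineqP⟩ := hCp
    obtain ⟨e1, e2⟩ := bd_inj heqP
    rw [← e1, ← e2] at hineqP
    obtain ⟨Y₁, Y₂, heqM, -, hineqM⟩ := hCm
    obtain ⟨f1, f2⟩ := bd_inj heqM
    rw [← f1, ← f2] at hineqM
    have keyM : ∀ w : Fin m → ℂ, dotProduct (star w) w = 1 →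
        lM ≤ Complex.re (dotProduct (star w) (Z₂ *ᵥ w)) := by
      intro w hw
      have c1 : 1 - t * Complex.re (dotProduct (star w) (Z₂ *ᵥ w))
          ≤ svN ((1 : Matrix (Fin m) (Fin m) ℂ) - (t : ℂ) • Z₂) 0 := by
        rw [← re_dot_one_sub Z₂ t w hw]
        exact re_dot_le_svN0 _ hm w hw
      have c3 : svN ((1 : Matrix (Fin k) (Fin k) ℂ) - (t : ℂ) • Z₁) (k - 1) ≤ 1 - t * lM :=
        svN_last_le_one_sub hH hk0 t imax h1mt
      have c4 : 1 - t * Complex.re (dotProduct (star w) (Z₂ *ᵥ w)) ≤ 1 - t * lM :=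
        le_trans c1 (le_trans hineqM c3)
      have c5 : t * lM ≤ t * Complex.re (dotProduct (star w) (Z₂ *ᵥ w)) := by linarith
      exact le_of_mul_le_mul_left c5 ht
    have keyP : ∀ w : Fin m → ℂ, dotProduct (star w) w = 1 →
        Complex.re (dotProduct (star w) (Z₂ *ᵥ w)) ≤ lm := by
      intro w hw
      have c1 : 1 + t * Complex.re (dotProduct (star w) (Z₂ *ᵥ w))
          ≤ svN ((1 : Matrix (Fin m) (Fin m) ℂ) + (t : ℂ) • Z₂) 0 := by
        rw [← re_dot_one_add Z₂ t w hw]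
        exact re_dot_le_svN0 _ hm w hw
      have c3 : svN ((1 : Matrix (Fin k) (Fin k) ℂ) + (t : ℂ) • Z₁) (k - 1) ≤ 1 + t * lm :=
        svN_last_le_one_add hH hk0 t imin (by nlinarith)
      have c4 : 1 + t * Complex.re (dotProduct (star w) (Z₂ *ᵥ w)) ≤ 1 + t * lm :=
        le_trans c1 (le_trans hineqP c3)
      have c5 : t * Complex.re (dotProduct (star w) (Z₂ *ᵥ w)) ≤ t * lm := by linarith
      exact le_of_mul_le_mul_left c5 ht
    have hw0 := single_unit (⟨0, hm⟩ : Fin m)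
    have hMm : lM ≤ lm := le_trans (keyM _ hw0) (keyP _ hw0)
    have hall : ∀ i, hH.eigenvalues i = lM := fun i =>
      le_antisymm (hmax i (Finset.mem_univ i))
        (le_trans hMm (hmin i (Finset.mem_univ i)))
    have hlmM : lm = lM := hall imin
    have hZ1eq : Z₁ = (lM : ℂ) • 1 := by
      have hdiag : Matrix.diagonal (RCLike.ofReal ∘ hH.eigenvalues)
          = (lM : ℂ) • (1 : Matrix (Fin k) (Fin k) ℂ) := by
        have hfun : (RCLike.ofReal ∘ hH.eigenvalues : Fin k → ℂ) = fun _ => (lM : ℂ) :=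
          funext fun i => by simp [Function.comp_apply, hall i]
        rw [hfun, Matrix.smul_one_eq_diagonal]
      calc Z₁ = _ := hH.spectral_theorem
        _ = (hH.eigenvectorUnitary : Matrix (Fin k) (Fin k) ℂ) *
            ((lM : ℂ) • (1 : Matrix (Fin k) (Fin k) ℂ)) *
            star (hH.eigenvectorUnitary : Matrix (Fin k) (Fin k) ℂ) := by rw [hdiag, Unitary.conjStarAlgAut_apply]
        _ = (lM : ℂ) • ((hH.eigenvectorUnitary : Matrix (Fin k) (Fin k) ℂ) *
            star (hH.eigenvectorUnitary : Matrix (Fin k) (Fin k) ℂ)) := by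
            rw [Matrix.mul_smul, Matrix.mul_one, Matrix.smul_mul]
        _ = (lM : ℂ) • 1 := by
            rw [(Matrix.mem_unitaryGroup_iff).mp hH.eigenvectorUnitary.2]
    rw [hZ1eq, svN_smul_one lM hlM0 (show k - 1 < k by omega)] at hs
    have hZ2w : ∀ w : Fin m → ℂ, dotProduct (star w) w = 1 →
        Z₂ *ᵥ w = (lM : ℂ) • w := by
      intro w hw
      have h1 : Nr (Z₂ *ᵥ w) ≤ lM ^ 2 := by
        have h := Nr_mulVec_le Z₂ hm w hw
        rwa [hs] at h
      have h2 : Complex.re (dotProduct (star w) (Z₂ *ᵥ w)) = lM :=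
        le_antisymm (le_trans (keyP w hw) (le_of_eq hlmM)) (keyM w hw)
      have h3 : Nr (Z₂ *ᵥ w - (lM : ℂ) • w) ≤ 0 := by
        rw [Nr_sub_smul, h2, Nr_of_unit hw]
        nlinarith
      have h4 := Nr_eq_zero h3
      rwa [sub_eq_zero] at h4
    have hZ2eq : Z₂ = (lM : ℂ) • 1 := by
      ext i j
      have h5 := hZ2w (Pi.single j 1) (single_unit j)
      have h6 := congrFun h5 i
      rw [Matrix.mulVec_single] at h6
      simp only [Pi.smul_apply, Pi.single_apply, smul_eq_mul, mul_one, MulOpposite.op_one, one_smul,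
        Matrix.col_apply] at h6
      rw [h6]
      by_cases hij : i = j <;> simp [Matrix.one_apply, hij]
    refine ⟨lM, hlM0, ?_⟩
    rw [hZ1eq, hZ2eq, bd_smul, bd_one, real_smul_mat]
  · rintro ⟨c, hc, rfl⟩
    have h1 : (c • (1 : Matrix (Fin (k + m)) (Fin (k + m)) ℂ)) = ((c : ℂ)) • 1 :=
      real_smul_mat c 1
    refine ⟨?_, 1 / (1 + c), by positivity, ?_⟩
    · rw [h1]
      exact scalar_mem_bC hk hm c hc
    · intro t ht ht'
      have htc : t * (1 + c) ≤ 1 := by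
        rw [← le_div_iff₀ (by positivity)]
        exact ht'
      constructor
      · have e : (1 : Matrix (Fin (k + m)) (Fin (k + m)) ℂ) + t • (c • 1)
            = ((1 + t * c : ℝ) : ℂ) • 1 := by
          rw [h1, real_smul_mat t, smul_smul, ← Complex.ofReal_mul, Complex.ofReal_add,
            Complex.ofReal_one, add_smul, one_smul]
        rw [e]
        exact scalar_mem_CC hk hm _ (by nlinarith)
      · have e : (1 : Matrix (Fin (k + m)) (Fin (k + m)) ℂ) - t • (c • 1)
            = ((1 - t * c : ℝ) : ℂ) • 1 := by
          rw [h1, real_smul_mat t, smul_smul, ← Complex.ofReal_mul, Complex.ofReal_sub,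
            Complex.ofReal_one, sub_smul, one_smul]
        rw [e]
        exact scalar_mem_CC hk hm _ (by nlinarith)
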